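/- Let δ ∈ ℂ satisfy δ⁴ + 1 = 0, so [0 : δ : 1] lies on C_{a,0} : x⁴ + y⁴ + z⁴ + a x² y² = 0. Then [0:δ:1] is a flex point of C_{a,0} (i.e. H_F(0,δ,1) = 0) if and only if a = 0. -/

import Mathlib

open MvPolynomial

/-- The Kuribayashi quartic with one parameter: `F = x⁴ + y⁴ + z⁴ + a x² y²`. -/
noncomputable def Fq (a : ℂ) : MvPolynomial (Fin 3) ℂ :=
  X 0 ^ 4 + X 1 ^ 4 + X 2 ^ 4 + C a * X 0 ^ 2 * X 1 ^ 2

/-- The Hessian determinant of `Fq a`. -/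
noncomputable def Hq (a : ℂ) : MvPolynomial (Fin 3) ℂ :=
  Matrix.det (Matrix.of fun i j : Fin 3 => pderiv i (pderiv j (Fq a)))

lemma pderiv_ofNat {σ R : Type*} [CommSemiring R] (i : σ) (n : ℕ) [n.AtLeastTwo] :
    pderiv i (ofNat(n) : MvPolynomial σ R) = 0 := by
  rw [← map_ofNat C n, pderiv_C]

lemma eval_Fq (a x y z : ℂ) :
    eval ![x, y, z] (Fq a) = x ^ 4 + y ^ 4 + z ^ 4 + a * x ^ 2 * y ^ 2 := by
  simp [Fq]

lemma hessian_Fq (a : ℂ) :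
    Matrix.of (fun i j : Fin 3 => pderiv i (pderiv j (Fq a))) =
      !![12 * X 0 ^ 2 + 2 * C a * X 1 ^ 2, 4 * C a * X 0 * X 1, 0;
        4 * C a * X 0 * X 1, 12 * X 1 ^ 2 + 2 * C a * X 0 ^ 2, 0;
        0, 0, 12 * X 2 ^ 2] := by
  ext i j : 1
  fin_cases i <;> fin_cases j <;> simp [Fq, pderiv_X, pderiv_ofNat] <;> ring

lemma eval_Hq (a x y z : ℂ) :
    eval ![x, y, z] (Hq a) =
      12 * z ^ 2 * ((12 * x ^ 2 + 2 * a * y ^ 2) * (12 * y ^ 2 + 2 * a * x ^ 2)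
        - 16 * a ^ 2 * x ^ 2 * y ^ 2) := by
  rw [Hq, hessian_Fq, Matrix.det_fin_three]
  simp only [Matrix.of_apply, Matrix.cons_val', Matrix.cons_val_zero, Matrix.cons_val_one,
    Matrix.cons_val, Matrix.cons_val_fin_one, mul_zero, zero_mul, sub_zero, add_zero, map_sub,
    map_mul, map_add, map_pow, eval_ofNat, eval_X, eval_C]
  ring

theorem zero_delta_one_flex_iff (a δ : ℂ)
    (hδ : δ ^ 4 + 1 = 0) :
    eval ![0, δ, 1] (Fq a) = 0 ∧ (eval ![0, δ, 1] (Hq a) = 0 ↔ a = 0) := by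
  have hH : eval ![0, δ, 1] (Hq a) = -288 * a := by
    rw [eval_Hq]
    linear_combination 288 * a * hδ
  refine ⟨?_, ?_⟩
  · rw [eval_Fq]
    linear_combination hδ
  · rw [hH]
    simp
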